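/- arXiv:1111.6094 — 3 statements merged into one kernel-verified Lean document; each statement's English description precedes it below -/
import Mathlib

section
/- Let A be a q-positive subset of an SSD space B. Then Φ_A^@ is the largest w(B,B)-lower semicontinuous convex function majorized by q on A; that is, Φ_A^@ is w(B,B)-lower semicontinuous, convex, satisfies Φ_A^@ ≤ q on A, and every w(B,B)-lower semicontinuous convex function f : B → ℝ ∪ {+∞} with f ≤ q on A satisfies f ≤ Φ_A^@ on all of B. -/
noncomputable section

variable {B : Type*} [AddCommGroup B] [Module ℝ B]

/-- The quadratic form `q(x) = ½⌊x,x⌋` associated to the bilinear form `br`. -/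
def qQ (br : B →ₗ[ℝ] B →ₗ[ℝ] ℝ) (x : B) : ℝ := (1 / 2) * br x x

/-- `A` is `q`-positive: nonempty and `q(b - c) ≥ 0` for all `b, c ∈ A`. -/
def IsQPositive (br : B →ₗ[ℝ] B →ₗ[ℝ] ℝ) (A : Set B) : Prop :=
  A.Nonempty ∧ ∀ b ∈ A, ∀ c ∈ A, 0 ≤ qQ br (b - c)

/-- `A^π`, the set of points `q`-positively related to `A`. -/
def qPi (br : B →ₗ[ℝ] B →ₗ[ℝ] ℝ) (A : Set B) : Set B :=
  {b : B | ∀ a ∈ A, 0 ≤ qQ br (b - a)}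

/-- `A` is maximally `q`-positive. -/
def IsMaxQPositive (br : B →ₗ[ℝ] B →ₗ[ℝ] ℝ) (A : Set B) : Prop :=
  IsQPositive br A ∧ ∀ C : Set B, IsQPositive br C → A ⊆ C → C = A

/-- The generalized Fitzpatrick function `Φ_A(x) = sup_{a ∈ A} (⌊x,a⌋ - q(a))`. -/
def PhiF (br : B →ₗ[ℝ] B →ₗ[ℝ] ℝ) (A : Set B) (x : B) : EReal :=
  ⨆ a ∈ A, ((br x a - qQ br a : ℝ) : EReal)

/-- The intrinsic conjugate `f^@(b) = sup_{c ∈ B} (⌊c,b⌋ - f(c))`. -/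
def intrinsicConj (br : B →ₗ[ℝ] B →ₗ[ℝ] ℝ) (f : B → EReal) (b : B) : EReal :=
  ⨆ c : B, ((br c b : ℝ) : EReal) - f c

/-- `P_q(f) = {b : f(b) = q(b)}`. -/
def PqSet (br : B →ₗ[ℝ] B →ₗ[ℝ] ℝ) (f : B → EReal) : Set B :=
  {b : B | f b = ((qQ br b : ℝ) : EReal)}

/-- `G_f = {b : f(b) + f^@(b) = ⌊b,b⌋}`. -/
def GSet (br : B →ₗ[ℝ] B →ₗ[ℝ] ℝ) (f : B → EReal) : Set B :=
  {b : B | f b + intrinsicConj br f b = ((br b b : ℝ) : EReal)}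

/-- Convexity for `ℝ ∪ {+∞}`-valued functions. -/
def ConvexE (f : B → EReal) : Prop :=
  ∀ x y : B, ∀ α β : ℝ, 0 ≤ α → 0 ≤ β → α + β = 1 →
    f (α • x + β • y) ≤ (α : EReal) * f x + (β : EReal) * f y

/-- The weak topology `w(B,B)` induced by the functionals `⌊·,b⌋`, `b ∈ B`. -/
def weakTop (br : B →ₗ[ℝ] B →ₗ[ℝ] ℝ) : TopologicalSpace B :=
  ⨅ b : B, TopologicalSpace.induced (fun x => br x b) inferInstance

/-- Lower semicontinuity with respect to the weak topology `w(B,B)`. -/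
def LscW (br : B →ₗ[ℝ] B →ₗ[ℝ] ℝ) (f : B → EReal) : Prop :=
  @LowerSemicontinuous B EReal (weakTop br) _ f

/-- `A` is `q`-representable: it has a `w(B,B)`-lsc proper convex `q`-representation. -/
def IsQRepresentable (br : B →ₗ[ℝ] B →ₗ[ℝ] ℝ) (A : Set B) : Prop :=
  ∃ f : B → EReal, LscW br f ∧ ConvexE f ∧ (∃ x, f x ≠ ⊤) ∧
    (∀ x, ((qQ br x : ℝ) : EReal) ≤ f x) ∧ PqSet br f = A

/-!
`Φ_A^@` is a supremum of the `w(B,B)`-continuous affine functions `b ↦ ⌊c,b⌋ - Φ_A(c)`, hence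
`w(B,B)`-lower semicontinuous and convex, and `⌊c,a⌋ - Φ_A(c) ≤ q(a)` for `a ∈ A` is immediate
from the definition of `Φ_A`. For maximality, `f ≤ q` on `A` gives `Φ_A ≤ f^@`, so
`f^@@ ≤ Φ_A^@`, and `f ≤ f^@@` is the Fenchel–Moreau inequality: separate a point below the
graph of `f` from its closed convex epigraph in `(B, w(B,B)) × ℝ` by Hahn–Banach, and use that the
`w(B,B)`-continuous linear functionals are exactly the `⌊·,c⌋`.
-/

theorem EReal.coe_sub_le_of_coe_sub_le {a r : ℝ} {y : EReal} (h : ((a - r : ℝ) : EReal) ≤ y) :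
    (a : EReal) - y ≤ r := by
  induction y using EReal.rec with
  | bot => exact absurd h (not_le.mpr (EReal.bot_lt_coe _))
  | top => simp
  | coe y => exact_mod_cast (by linarith [(EReal.coe_le_coe_iff.mp h)] : a - y ≤ r)

theorem EReal.continuous_coe_sub_const (k : EReal) : Continuous fun x : ℝ => (x : EReal) - k := by
  induction k using EReal.rec with
  | bot => simpa only [EReal.coe_sub_bot] using continuous_const
  | top => simpa only [EReal.sub_top] using continuous_const
  | coe k =>
    simp only [← EReal.coe_sub]
    exact continuous_coe_real_ereal.comp (continuous_sub_right k)

section ConvexE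

variable {E : Type*} [AddCommGroup E] [Module ℝ E]

theorem convexE_const (k : EReal) : ConvexE fun _ : E => k := by
  intro _ _ α β hα hβ hαβ
  rw [← EReal.right_distrib_of_nonneg (mod_cast hα) (mod_cast hβ), ← EReal.coe_add, hαβ,
    EReal.coe_one, one_mul]

theorem convexE_coe_sub (ℓ : E →ₗ[ℝ] ℝ) (k : EReal) : ConvexE fun x => (ℓ x : EReal) - k := by
  induction k using EReal.rec with
  | bot => simpa only [EReal.coe_sub_bot] using convexE_const ⊤
  | top => simpa only [EReal.sub_top] using convexE_const ⊥
  | coe k =>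
    intro x y α β _ _ hαβ
    simp only [← EReal.coe_sub, ← EReal.coe_mul, ← EReal.coe_add, EReal.coe_le_coe_iff,
      map_add, map_smul, smul_eq_mul]
    linear_combination k * hαβ

theorem ConvexE.iSup {ι : Sort*} {f : ι → E → EReal} (hf : ∀ i, ConvexE (f i)) :
    ConvexE fun x => ⨆ i, f i x := by
  intro x y α β hα hβ hαβ
  refine iSup_le fun i => (hf i x y α β hα hβ hαβ).trans (add_le_add ?_ ?_)
  · exact mul_le_mul_of_nonneg_left (le_iSup (f · x) i) (mod_cast hα)
  · exact mul_le_mul_of_nonneg_left (le_iSup (f · y) i) (mod_cast hβ)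

theorem ConvexE.convex_epigraph {f : E → EReal} (hf : ConvexE f) :
    Convex ℝ {p : E × ℝ | f p.1 ≤ p.2} := by
  rintro ⟨x, s⟩ hx ⟨y, s'⟩ hy α β hα hβ hαβ
  have hα' : (0 : EReal) ≤ α := mod_cast hα
  have hβ' : (0 : EReal) ≤ β := mod_cast hβ
  calc f (α • x + β • y) ≤ α * f x + β * f y := hf x y α β hα hβ hαβ
    _ ≤ α * s + β * s' :=
      add_le_add (mul_le_mul_of_nonneg_left hx hα') (mul_le_mul_of_nonneg_left hy hβ')
    _ = ((α • (x, s) + β • (y, s')).2 : ℝ) := by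
      simp only [Prod.snd_add, Prod.smul_snd, smul_eq_mul]; norm_cast

end ConvexE

section Epigraph

variable {E : Type*} {f : E → EReal}

theorem LowerSemicontinuous.isClosed_real_epigraph [TopologicalSpace E]
    (hf : LowerSemicontinuous f) : IsClosed {p : E × ℝ | f p.1 ≤ p.2} :=
  hf.isClosed_epigraph.preimage
    (continuous_fst.prodMk (continuous_coe_real_ereal.comp continuous_snd))

theorem nonneg_of_forall_epigraph {ℓ : E → ℝ} {a u : ℝ} {x₀ : E} {v₀ : ℝ}
    (h₀ : f x₀ ≤ v₀) (h : ∀ x (v : ℝ), f x ≤ v → u < ℓ x + a * v) : 0 ≤ a := by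
  by_contra! ha
  set v := max v₀ ((u - ℓ x₀) / a)
  have hv : v * a ≤ u - ℓ x₀ := (div_le_iff_of_neg ha).mp (le_max_right _ _)
  linarith [h x₀ v (h₀.trans (mod_cast le_max_left _ _))]

theorem coe_div_le_of_forall_epigraph {g : E → ℝ} {κ : ℝ} (hκ : 0 < κ)
    (h : ∀ x (v : ℝ), f x ≤ v → g x ≤ κ * v) (x : E) : ((g x / κ : ℝ) : EReal) ≤ f x :=
  EReal.le_of_forall_lt_iff_le.mp fun v hv =>
    mod_cast (div_le_iff₀ hκ).mpr ((h x v hv.le).trans_eq (mul_comm _ _))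

end Epigraph

section AffineMinorant

variable {E : Type*} [AddCommGroup E] [Module ℝ E] [TopologicalSpace E] [IsTopologicalAddGroup E]
  [ContinuousSMul ℝ E] [LocallyConvexSpace ℝ E] {f : E → EReal}

theorem exists_separation_epigraph (hlsc : LowerSemicontinuous f) (hconv : ConvexE f)
    {b : E} {t : ℝ} (ht : t < f b) :
    ∃ (ℓ : StrongDual ℝ E) (a u : ℝ),
      ℓ b + a * t < u ∧ ∀ x (v : ℝ), f x ≤ v → u < ℓ x + a * v := by
  obtain ⟨φ, u, hb, hepi⟩ := geometric_hahn_banach_point_closed hconv.convex_epigraph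
    hlsc.isClosed_real_epigraph (show (b, t) ∉ {p : E × ℝ | f p.1 ≤ p.2} from not_le.mpr ht)
  have hφ : ∀ x s, φ (x, s) = φ.comp (.inl ℝ E ℝ) x + φ (0, 1) * s := fun x s => by
    rw [show ((x, s) : E × ℝ) = (x, 0) + s • (0, 1) by simp, map_add, map_smul, smul_eq_mul,
      mul_comm]
    rfl
  exact ⟨_, _, u, by rwa [← hφ], fun x v hv => by rw [← hφ]; exact hepi (x, v) hv⟩

theorem exists_affine_minorant (hlsc : LowerSemicontinuous f) (hconv : ConvexE f)
    {x₀ : E} {v₀ : ℝ} (h₀ : f x₀ = v₀) :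
    ∃ (ℓ : StrongDual ℝ E) (r : ℝ), ∀ x, ((ℓ x - r : ℝ) : EReal) ≤ f x := by
  obtain ⟨ℓ, a, u, hb, hepi⟩ :=
    exists_separation_epigraph hlsc hconv (t := v₀ - 1) (by rw [h₀]; exact_mod_cast sub_one_lt v₀)
  have ha : 0 < a := by linarith [hepi x₀ v₀ h₀.le]
  refine ⟨-a⁻¹ • ℓ, -(u / a), fun x => ?_⟩
  convert coe_div_le_of_forall_epigraph ha (g := fun x => u - ℓ x)
    (fun x v hv => by linarith [hepi x v hv]) x using 2
  simp only [smul_apply, smul_eq_mul]; ring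

theorem exists_affine_minorant_gt (hlsc : LowerSemicontinuous f) (hconv : ConvexE f)
    {x₀ : E} {v₀ : ℝ} (h₀ : f x₀ = v₀) {b : E} {t : ℝ} (ht : t < f b) :
    ∃ (ℓ : StrongDual ℝ E) (r : ℝ), (∀ x, ((ℓ x - r : ℝ) : EReal) ≤ f x) ∧ t < ℓ b - r := by
  obtain ⟨ℓ₁, r₁, h₁⟩ := exists_affine_minorant hlsc hconv h₀
  obtain ⟨ℓ, a, u, hb, hepi⟩ := exists_separation_epigraph hlsc hconv ht
  have ha : 0 ≤ a := nonneg_of_forall_epigraph h₀.le hepi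
  -- If `a = 0` the separating hyperplane is vertical; tilting the minorant `ℓ₁ - r₁` by a large
  -- multiple `μ` of `u - ℓ` makes it pass above `(b, t)` in both cases.
  obtain ⟨n, hn⟩ := exists_nat_gt ((t - (ℓ₁ b - r₁)) / (u - ℓ b - a * t))
  set μ : ℝ := (n : ℝ)
  have hμ : 0 ≤ μ := n.cast_nonneg
  have hκ : 0 < μ * a + 1 := by positivity
  have hcomb : ∀ x (v : ℝ), f x ≤ v → (ℓ₁ - μ • ℓ) x - (r₁ - μ * u) ≤ (μ * a + 1) * v := by
    intro x v hv
    have h₁x : ℓ₁ x - r₁ ≤ v := mod_cast (h₁ x).trans hv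
    have := mul_le_mul_of_nonneg_left (hepi x v hv).le hμ
    simp only [sub_apply, smul_apply, smul_eq_mul]
    linarith
  refine ⟨(μ * a + 1)⁻¹ • (ℓ₁ - μ • ℓ), (μ * a + 1)⁻¹ * (r₁ - μ * u), fun x => ?_, ?_⟩
  · convert coe_div_le_of_forall_epigraph hκ hcomb x using 2
    simp only [smul_apply, smul_eq_mul]; ring
  · have hgap : t - (ℓ₁ b - r₁) < μ * (u - ℓ b - a * t) :=
      (div_lt_iff₀ (by linarith)).mp hn
    simp only [smul_apply, sub_apply, smul_eq_mul, ← div_eq_inv_mul]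
    rw [← sub_div, lt_div_iff₀ hκ]
    linarith

end AffineMinorant

section WeakTopology

variable (br : B →ₗ[ℝ] B →ₗ[ℝ] ℝ)

theorem weakTop_eq_weakBilin : weakTop br = WeakBilin.instTopologicalSpace br := by
  show weakTop br = TopologicalSpace.induced (fun x y => br x y) Pi.topologicalSpace
  rw [show (Pi.topologicalSpace : TopologicalSpace (B → ℝ)) =
      ⨅ b : B, TopologicalSpace.induced (fun f => f b) inferInstance from rfl, induced_iInf]
  simp_rw [induced_compose]
  rfl

theorem lscW_iff_lowerSemicontinuous_weakBilin {f : B → EReal} :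
    LscW br f ↔ @LowerSemicontinuous (WeakBilin br) EReal _ _ f := by
  rw [LscW, weakTop_eq_weakBilin]; rfl

theorem continuous_weakTop_apply (c : B) : @Continuous B ℝ (weakTop br) _ fun x => br x c :=
  continuous_iInf_dom continuous_induced_dom

variable {br}

theorem LscW.exists_minorant_gt {f : B → EReal} (hf : LscW br f) (hconv : ConvexE f) {x₀ : B}
    {v₀ : ℝ} (h₀ : f x₀ = v₀) {b : B} {t : ℝ} (ht : t < f b) :
    ∃ (c : B) (r : ℝ), (∀ x, ((br x c - r : ℝ) : EReal) ≤ f x) ∧ t < br b c - r := by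
  have hconv' : ConvexE (B := WeakBilin br) f := hconv
  obtain ⟨ℓ, r, hℓ, hb⟩ :=
    exists_affine_minorant_gt ((lscW_iff_lowerSemicontinuous_weakBilin br).mp hf) hconv' h₀ ht
  obtain ⟨c, rfl⟩ := LinearMap.dualEmbedding_surjective br ℓ
  exact ⟨c, r, hℓ, hb⟩

end WeakTopology

section IntrinsicConj

variable {br : B →ₗ[ℝ] B →ₗ[ℝ] ℝ}

theorem intrinsicConj_anti {g h : B → EReal} (hgh : g ≤ h) :
    intrinsicConj br h ≤ intrinsicConj br g :=
  fun _ => iSup_mono fun c => EReal.sub_le_sub le_rfl (hgh c)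

theorem lscW_intrinsicConj (hsym : ∀ x y : B, br x y = br y x) (g : B → EReal) :
    LscW br (intrinsicConj br g) := by
  let := weakTop br
  refine lowerSemicontinuous_iSup fun c => ?_
  simp only [hsym c]
  exact ((EReal.continuous_coe_sub_const (g c)).comp
    (continuous_weakTop_apply br c)).lowerSemicontinuous

theorem convexE_intrinsicConj (g : B → EReal) : ConvexE (intrinsicConj br g) :=
  ConvexE.iSup fun c => convexE_coe_sub (br c) (g c)

theorem intrinsicConj_PhiF_le_qQ {A : Set B} {a : B} (ha : a ∈ A) :
    intrinsicConj br (PhiF br A) a ≤ qQ br a := by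
  refine iSup_le fun c => ?_
  calc (br c a : EReal) - PhiF br A c ≤ (br c a : EReal) - ((br c a - qQ br a : ℝ) : EReal) :=
        EReal.sub_le_sub le_rfl (le_iSup₂_of_le a ha le_rfl)
    _ = qQ br a := by rw [← EReal.coe_sub, sub_sub_cancel]

theorem PhiF_le_intrinsicConj (hsym : ∀ x y : B, br x y = br y x) {A : Set B} {f : B → EReal}
    (hfA : ∀ a ∈ A, f a ≤ qQ br a) : PhiF br A ≤ intrinsicConj br f := fun x =>
  iSup₂_le fun a ha => le_iSup_of_le a <| by
    rw [EReal.coe_sub, hsym]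
    exact EReal.sub_le_sub le_rfl (hfA a ha)

theorem le_intrinsicConj_intrinsicConj (hsym : ∀ x y : B, br x y = br y x) {f : B → EReal}
    (hf : LscW br f) (hconv : ConvexE f) (hbot : ∀ x, f x ≠ ⊥) (hproper : ∃ x, f x ≠ ⊤) :
    f ≤ intrinsicConj br (intrinsicConj br f) := by
  intro b
  obtain ⟨x₀, hx₀⟩ := hproper
  refine EReal.ge_of_forall_gt_iff_ge.mp fun t ht => ?_
  obtain ⟨c, r, hmin, hbt⟩ := hf.exists_minorant_gt hconv (EReal.coe_toReal hx₀ (hbot x₀)).symm ht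
  have hconj : intrinsicConj br f c ≤ r :=
    iSup_le fun x => EReal.coe_sub_le_of_coe_sub_le (hmin x)
  calc (t : EReal) ≤ ((br c b - r : ℝ) : EReal) := by rw [hsym]; exact_mod_cast hbt.le
    _ ≤ (br c b : EReal) - intrinsicConj br f c := by
      rw [EReal.coe_sub]; exact EReal.sub_le_sub le_rfl hconj
    _ ≤ intrinsicConj br (intrinsicConj br f) b := le_iSup_of_le c le_rfl

end IntrinsicConj

theorem stmt1_general (br : B →ₗ[ℝ] B →ₗ[ℝ] ℝ)
    (hsym : ∀ x y : B, br x y = br y x)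
    (A : Set B) (hA : IsQPositive br A) :
    LscW br (intrinsicConj br (PhiF br A)) ∧
    ConvexE (intrinsicConj br (PhiF br A)) ∧
    (∀ a ∈ A, intrinsicConj br (PhiF br A) a ≤ ((qQ br a : ℝ) : EReal)) ∧
    (∀ f : B → EReal, LscW br f → ConvexE f → (∀ x, f x ≠ ⊥) →
      (∀ a ∈ A, f a ≤ ((qQ br a : ℝ) : EReal)) →
      ∀ b : B, f b ≤ intrinsicConj br (PhiF br A) b) := by
  refine ⟨lscW_intrinsicConj hsym _, convexE_intrinsicConj _,
    fun a ha => intrinsicConj_PhiF_le_qQ ha, fun f hf hconv hbot hfA => ?_⟩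
  obtain ⟨a₀, ha₀⟩ := hA.1
  have hproper : f a₀ ≠ ⊤ := ((hfA a₀ ha₀).trans_lt (EReal.coe_lt_top _)).ne
  exact (le_intrinsicConj_intrinsicConj hsym hf hconv hbot ⟨a₀, hproper⟩).trans
    (intrinsicConj_anti (PhiF_le_intrinsicConj hsym hfA))

/-- Φ_A^@ is the largest w(B,B)-lsc convex function majorized by q on A. -/
theorem stmt1 [Nontrivial B] (br : B →ₗ[ℝ] B →ₗ[ℝ] ℝ)
    (hsym : ∀ x y : B, br x y = br y x)
    (A : Set B) (hA : IsQPositive br A) :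
    LscW br (intrinsicConj br (PhiF br A)) ∧
    ConvexE (intrinsicConj br (PhiF br A)) ∧
    (∀ a ∈ A, intrinsicConj br (PhiF br A) a ≤ ((qQ br a : ℝ) : EReal)) ∧
    (∀ f : B → EReal, LscW br f → ConvexE f → (∀ x, f x ≠ ⊥) →
      (∀ a ∈ A, f a ≤ ((qQ br a : ℝ) : EReal)) →
      ∀ b : B, f b ≤ intrinsicConj br (PhiF br A) b) :=
  stmt1_general br hsym A hA
end
end

section
/- Let B be an SSD space and x₁, x₂ ∈ B with q(x₁ − x₂) ≤ 0. Then for every λ ∈ [0,1], λx₁ + (1 − λ)x₂ ∈ ({x₁, x₂}^π)^π. -/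
noncomputable section

variable {B : Type*} [AddCommGroup B] [Module ℝ B]

theorem qQ_neg (br : B →ₗ[ℝ] B →ₗ[ℝ] ℝ) (x : B) : qQ br (-x) = qQ br x := by
  simp [qQ]

theorem qQ_sub_comm (br : B →ₗ[ℝ] B →ₗ[ℝ] ℝ) (x y : B) : qQ br (x - y) = qQ br (y - x) := by
  rw [← neg_sub, qQ_neg]

theorem qQ_smul_add_one_sub_smul (br : B →ₗ[ℝ] B →ₗ[ℝ] ℝ) (u v : B) (lam : ℝ) :
    qQ br (lam • u + (1 - lam) • v) =
      lam * qQ br u + (1 - lam) * qQ br v - lam * (1 - lam) * qQ br (u - v) := by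
  simp only [qQ, map_add, map_sub, map_smul, LinearMap.add_apply, LinearMap.sub_apply,
    LinearMap.smul_apply, smul_eq_mul]
  ring

theorem qQ_smul_add_one_sub_smul_nonneg (br : B →ₗ[ℝ] B →ₗ[ℝ] ℝ)
    {u v : B} (hu : 0 ≤ qQ br u) (hv : 0 ≤ qQ br v) (huv : qQ br (u - v) ≤ 0)
    {lam : ℝ} (h0 : 0 ≤ lam) (h1 : lam ≤ 1) :
    0 ≤ qQ br (lam • u + (1 - lam) • v) := by
  rw [qQ_smul_add_one_sub_smul br]
  nlinarith [mul_nonneg h0 hu, mul_nonneg (sub_nonneg.2 h1) hv,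
    mul_nonneg (mul_nonneg h0 (sub_nonneg.2 h1)) (neg_nonneg.2 huv)]

theorem stmt13_general (br : B →ₗ[ℝ] B →ₗ[ℝ] ℝ)
    (x₁ x₂ : B) (h : qQ br (x₁ - x₂) ≤ 0) :
    ∀ lam : ℝ, 0 ≤ lam → lam ≤ 1 →
      lam • x₁ + (1 - lam) • x₂ ∈ qPi br (qPi br ({x₁, x₂} : Set B)) := by
  intro lam h0 h1 b hb
  have hu : 0 ≤ qQ br (x₁ - b) := qQ_sub_comm br b x₁ ▸ hb x₁ (by simp)
  have hv : 0 ≤ qQ br (x₂ - b) := qQ_sub_comm br b x₂ ▸ hb x₂ (by simp)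
  have hsegment : lam • x₁ + (1 - lam) • x₂ - b = lam • (x₁ - b) + (1 - lam) • (x₂ - b) := by
    module
  rw [hsegment]
  exact qQ_smul_add_one_sub_smul_nonneg br hu hv (by rwa [sub_sub_sub_cancel_right]) h0 h1

/-- If q(x₁ - x₂) ≤ 0 then λx₁ + (1-λ)x₂ ∈ {x₁,x₂}^ππ for λ ∈ [0,1]. -/
theorem stmt13 [Nontrivial B] (br : B →ₗ[ℝ] B →ₗ[ℝ] ℝ)
    (hsym : ∀ x y : B, br x y = br y x)
    (x₁ x₂ : B) (h : qQ br (x₁ - x₂) ≤ 0) :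
    ∀ lam : ℝ, 0 ≤ lam → lam ≤ 1 →
      lam • x₁ + (1 - lam) • x₂ ∈ qPi br (qPi br ({x₁, x₂} : Set B)) :=
  stmt13_general br x₁ x₂ h
end
end

section
/- Let P be a q-positive subset of an SSD space B such that Φ_P(b) ≥ q(b) for all b ∈ B. Then P is premaximally q-positive, and its unique maximally q-positive superset is P^π = P_q(Φ_P). -/
/-!
Since `q(b - a) = q(b) - (⌊b,a⌋ - q(a))`, a point `b` lies in `P^π` exactly when `Φ_P(b) ≤ q(b)`;
with `q ≤ Φ_P` this gives `P^π = P_q(Φ_P)`. For `b, c ∈ P^π` with midpoint `m`, averaging the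
affine functions whose supremum is `Φ_P` gives `q(m) ≤ Φ_P(m) ≤ (q(b) + q(c)) / 2`, and the gap between the two
ends is `q(b - c) / 4`, so `P^π` is `q`-positive. Every `q`-positive superset of `P` lies in `P^π`,
so `P^π` is the unique maximally `q`-positive superset of `P`.
-/

noncomputable section

variable {B : Type*} [AddCommGroup B] [Module ℝ B]

variable {br : B →ₗ[ℝ] B →ₗ[ℝ] ℝ}

lemma qQ_sub (hsym : ∀ x y : B, br x y = br y x) (b c : B) :
    qQ br (b - c) = qQ br b + qQ br c - br b c := by
  simp only [qQ, map_sub, LinearMap.sub_apply, hsym c b]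
  ring

lemma qQ_midpoint (hsym : ∀ x y : B, br x y = br y x) (b c : B) :
    qQ br ((1 / 2 : ℝ) • b + (1 / 2 : ℝ) • c) =
      (1 / 2) * qQ br b + (1 / 2) * qQ br c - (1 / 4) * qQ br (b - c) := by
  simp only [qQ, map_add, map_sub, map_smul, LinearMap.add_apply, LinearMap.sub_apply,
    LinearMap.smul_apply, smul_eq_mul, hsym c b]
  ring

lemma PhiF_le_coe_iff {A : Set B} {x : B} {r : ℝ} :
    PhiF br A x ≤ (r : EReal) ↔ ∀ a ∈ A, br x a - qQ br a ≤ r := by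
  simp only [PhiF, iSup₂_le_iff, EReal.coe_le_coe_iff]

lemma mem_qPi_iff_PhiF_le (hsym : ∀ x y : B, br x y = br y x) {A : Set B} {b : B} :
    b ∈ qPi br A ↔ PhiF br A b ≤ (qQ br b : EReal) := by
  rw [PhiF_le_coe_iff]
  refine forall₂_congr fun a _ => ?_
  rw [qQ_sub hsym]
  constructor <;> intro h <;> linarith

lemma qPi_eq_PqSet_PhiF (hsym : ∀ x y : B, br x y = br y x) {A : Set B}
    (hPhi : ∀ b : B, (qQ br b : EReal) ≤ PhiF br A b) :
    qPi br A = PqSet br (PhiF br A) := by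
  ext b
  rw [mem_qPi_iff_PhiF_le hsym, PqSet, Set.mem_ofPred_eq]
  exact ⟨fun h => le_antisymm h (hPhi b), le_of_eq⟩

lemma PhiF_midpoint_le_of_mem_qPi (hsym : ∀ x y : B, br x y = br y x) {A : Set B} {b c : B}
    (hb : b ∈ qPi br A) (hc : c ∈ qPi br A) :
    PhiF br A ((1 / 2 : ℝ) • b + (1 / 2 : ℝ) • c) ≤
      (((1 / 2) * qQ br b + (1 / 2) * qQ br c : ℝ) : EReal) := by
  rw [mem_qPi_iff_PhiF_le hsym, PhiF_le_coe_iff] at hb hc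
  rw [PhiF_le_coe_iff]
  intro a ha
  have hb' := hb a ha
  have hc' := hc a ha
  simp only [map_add, map_smul, LinearMap.add_apply, LinearMap.smul_apply, smul_eq_mul]
  linarith

lemma IsQPositive.subset_qPi_of_subset {A C : Set B} (hC : IsQPositive br C) (hAC : A ⊆ C) :
    C ⊆ qPi br A :=
  fun c hc a ha => hC.2 c hc a (hAC ha)

lemma IsQPositive.subset_qPi {A : Set B} (hA : IsQPositive br A) : A ⊆ qPi br A :=
  hA.subset_qPi_of_subset subset_rfl

lemma isQPositive_qPi (hsym : ∀ x y : B, br x y = br y x) {P : Set B} (hP : IsQPositive br P)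
    (hPhi : ∀ b : B, (qQ br b : EReal) ≤ PhiF br P b) :
    IsQPositive br (qPi br P) := by
  refine ⟨hP.1.mono hP.subset_qPi, fun b hb c hc => ?_⟩
  have hmid : qQ br ((1 / 2 : ℝ) • b + (1 / 2 : ℝ) • c) ≤ (1 / 2) * qQ br b + (1 / 2) * qQ br c :=
    EReal.coe_le_coe_iff.1 ((hPhi _).trans (PhiF_midpoint_le_of_mem_qPi hsym hb hc))
  rw [qQ_midpoint hsym] at hmid
  linarith

lemma isMaxQPositive_qPi {A : Set B} (hA : A ⊆ qPi br A) (hpos : IsQPositive br (qPi br A)) :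
    IsMaxQPositive br (qPi br A) :=
  ⟨hpos, fun _ hC hsub => (hC.subset_qPi_of_subset (hA.trans hsub)).antisymm hsub⟩

lemma IsMaxQPositive.eq_qPi {A M : Set B} (hM : IsMaxQPositive br M) (hAM : A ⊆ M)
    (hpos : IsQPositive br (qPi br A)) :
    M = qPi br A :=
  (hM.2 _ hpos (hM.1.subset_qPi_of_subset hAM)).symm

theorem stmt16_general (br : B →ₗ[ℝ] B →ₗ[ℝ] ℝ)
    (hsym : ∀ x y : B, br x y = br y x)
    (P : Set B) (hP : IsQPositive br P)
    (hPhi : ∀ b : B, ((qQ br b : ℝ) : EReal) ≤ PhiF br P b) :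
    (∃! M : Set B, IsMaxQPositive br M ∧ P ⊆ M) ∧
    IsMaxQPositive br (qPi br P) ∧ P ⊆ qPi br P ∧
    qPi br P = PqSet br (PhiF br P) := by
  have hsub : P ⊆ qPi br P := hP.subset_qPi
  have hpos : IsQPositive br (qPi br P) := isQPositive_qPi hsym hP hPhi
  have hmax : IsMaxQPositive br (qPi br P) := isMaxQPositive_qPi hsub hpos
  exact ⟨⟨qPi br P, ⟨hmax, hsub⟩, fun M ⟨hM, hPM⟩ => hM.eq_qPi hPM hpos⟩,
    hmax, hsub, qPi_eq_PqSet_PhiF hsym hPhi⟩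

/-- If Φ_P ≥ q on B then P is premaximally q-positive and its
unique maximally q-positive superset is P^π = P_q(Φ_P). -/
theorem stmt16 [Nontrivial B] (br : B →ₗ[ℝ] B →ₗ[ℝ] ℝ)
    (hsym : ∀ x y : B, br x y = br y x)
    (P : Set B) (hP : IsQPositive br P)
    (hPhi : ∀ b : B, ((qQ br b : ℝ) : EReal) ≤ PhiF br P b) :
    (∃! M : Set B, IsMaxQPositive br M ∧ P ⊆ M) ∧
    IsMaxQPositive br (qPi br P) ∧ P ⊆ qPi br P ∧
    qPi br P = PqSet br (PhiF br P) :=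
  stmt16_general br hsym P hP hPhi
end
end
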